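/- Suppose X ⊂ [0,1]^m satisfies dim X < s (Hausdorff dimension). Then for every ε > 0 there exist collections C_{2^{-k}} of dyadic cubes of side length 2^{-k} (k > 0) such that: (1) X ⊂ ∪_{k>0} ∪_{D ∈ C_{2^{-k}}} D; (2) Σ_{k>0} Σ_{D ∈ C_{2^{-k}}} r(D)^s ≤ ε; (3) for every l < k and every dyadic cube D of side length 2^{-l}, the number of cubes D′ ∈ C_{2^{-k}} contained in D is at most 2^{(k−l)s}. -/

import Mathlib

/-!
Since `dimH X < s`, `μH[s] X = 0`, so `X` is covered by countably many sets of small total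
`s`-content. Replacing each of them by the at most `3 ^ m` dyadic cubes of comparable side that
meet it gives a countable family `S` of dyadic cubes covering `X` with `∑_{D ∈ S} r(D) ^ s < 1`.

Put the mass `r(D) ^ s` on each `D ∈ S` and call a dyadic cube heavy if its subcubes carry at
least its own content `r ^ s`. Cubes of `S` are heavy, and every heavy cube lies in a maximal
one because a cube has only finitely many ancestors. Maximal heavy cubes are disjoint, so their
total content is at most the total mass `< 1`; in particular none of them has side `1`.
A cube strictly containing a maximal heavy cube is not heavy, so the maximal heavy cubes inside
it have total content below its own: this is the spacing condition.
-/

open Metric Set MeasureTheory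
open scoped ENNReal

noncomputable section

/-- The dyadic cube of side `2^{-k}` indexed by `z ∈ ℕ^m`. -/
def dyCube (m k : ℕ) (z : Fin m → ℕ) : Set (Fin m → ℝ) :=
  {x | ∀ i, (z i : ℝ) / 2 ^ k ≤ x i ∧ x i < ((z i : ℝ) + 1) / 2 ^ k}

lemma mem_dyCube_iff {m k : ℕ} {z : Fin m → ℕ} {x : Fin m → ℝ} :
    x ∈ dyCube m k z ↔ ∀ i, 0 ≤ x i ∧ ⌊x i * 2 ^ k⌋₊ = z i := by
  refine forall_congr' fun i => ?_
  have h2k : (0 : ℝ) < 2 ^ k := by positivity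
  rw [div_le_iff₀ h2k, lt_div_iff₀ h2k]
  constructor
  · rintro ⟨hlo, hhi⟩
    have hx : 0 ≤ x i * 2 ^ k := (Nat.cast_nonneg _).trans hlo
    exact ⟨nonneg_of_mul_nonneg_left hx h2k, (Nat.floor_eq_iff hx).2 ⟨hlo, hhi⟩⟩
  · rintro ⟨hx, hz⟩
    exact (Nat.floor_eq_iff (by positivity)).1 hz

lemma Nat.floor_mul_two_pow_div_two_pow {x : ℝ} {k l : ℕ} (hlk : l ≤ k) :
    ⌊x * 2 ^ k⌋₊ / 2 ^ (k - l) = ⌊x * 2 ^ l⌋₊ := by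
  rw [← Nat.floor_div_natCast, Nat.cast_pow, Nat.cast_ofNat, ← pow_sub_mul_pow 2 hlk]
  field_simp

lemma dyCube_nonempty (m k : ℕ) (z : Fin m → ℕ) : (dyCube m k z).Nonempty :=
  ⟨fun i => z i / 2 ^ k, mem_dyCube_iff.2 fun i => ⟨by positivity, by
    rw [div_mul_cancel₀ _ (by positivity), Nat.floor_natCast]⟩⟩

@[ext] structure DyadicIndex (m : ℕ) where
  level : ℕ
  index : Fin m → ℕ

namespace DyadicIndex

variable {m : ℕ}

def equivProd : DyadicIndex m ≃ ℕ × (Fin m → ℕ) where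
  toFun p := (p.level, p.index)
  invFun p := ⟨p.1, p.2⟩

instance : Countable (DyadicIndex m) := Countable.of_equiv _ equivProd.symm

def cube (p : DyadicIndex m) : Set (Fin m → ℝ) := dyCube m p.level p.index

def ancestor (p : DyadicIndex m) (l : ℕ) : DyadicIndex m :=
  ⟨l, fun i => p.index i / 2 ^ (p.level - l)⟩

@[simp] lemma level_ancestor (p : DyadicIndex m) (l : ℕ) : (p.ancestor l).level = l := rfl

lemma ancestor_level (p : DyadicIndex m) : p.ancestor p.level = p := by
  ext <;> simp [ancestor]

lemma ancestor_ancestor (p : DyadicIndex m) {l l' : ℕ} (hl' : l' ≤ l) (hl : l ≤ p.level) :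
    (p.ancestor l).ancestor l' = p.ancestor l' := by
  simp only [ancestor, Nat.div_div_eq_div_mul, ← pow_add, Nat.sub_add_sub_cancel hl hl']

instance : PartialOrder (DyadicIndex m) where
  le p q := q.level ≤ p.level ∧ p.ancestor q.level = q
  le_refl p := ⟨le_rfl, p.ancestor_level⟩
  le_trans p q r := fun ⟨hqp, hq⟩ ⟨hrq, hr⟩ => ⟨hrq.trans hqp, by
    rw [← hr, ← hq, level_ancestor, p.ancestor_ancestor hrq hqp]⟩
  le_antisymm p q := fun ⟨hqp, hq⟩ ⟨hpq, _⟩ => by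
    rw [← hq, le_antisymm hqp hpq, ancestor_level]

lemma finite_Ici (p : DyadicIndex m) : (Ici p).Finite :=
  ((Set.finite_Iic p.level).image p.ancestor).subset fun _ ⟨hqp, hq⟩ => ⟨_, hqp, hq⟩

lemma le_total_of_le {p q r : DyadicIndex m} (hq : p ≤ q) (hr : p ≤ r) : q ≤ r ∨ r ≤ q := by
  obtain ⟨hqp, hq⟩ := hq
  obtain ⟨hrp, hr⟩ := hr
  rcases le_total q.level r.level with h | h
  · exact Or.inr ⟨h, by rw [← hq, ← hr, level_ancestor, p.ancestor_ancestor h hrp]⟩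
  · exact Or.inl ⟨h, by rw [← hq, ← hr, level_ancestor, p.ancestor_ancestor h hqp]⟩

lemma mem_cube_ancestor {p : DyadicIndex m} {x : Fin m → ℝ} (hx : x ∈ p.cube) {l : ℕ}
    (hl : l ≤ p.level) : x ∈ (p.ancestor l).cube := by
  rw [cube, mem_dyCube_iff] at hx ⊢
  intro i
  obtain ⟨hx0, hxp⟩ := hx i
  exact ⟨hx0, by simp [ancestor, ← hxp, Nat.floor_mul_two_pow_div_two_pow hl]⟩

lemma cube_mono {p q : DyadicIndex m} (h : p ≤ q) : p.cube ⊆ q.cube :=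
  fun _ hx => h.2 ▸ mem_cube_ancestor hx h.1

lemma le_of_mem_cube {p q : DyadicIndex m} {x : Fin m → ℝ} (hp : x ∈ p.cube) (hq : x ∈ q.cube)
    (h : q.level ≤ p.level) : p ≤ q := by
  refine ⟨h, DyadicIndex.ext rfl (funext fun i => ?_)⟩
  rw [cube, mem_dyCube_iff] at hp hq
  simp [ancestor, ← (hp i).2, ← (hq i).2, Nat.floor_mul_two_pow_div_two_pow h]

end DyadicIndex

def dyContent (s : ℝ) (k : ℕ) : ℝ≥0∞ := ((2 : ℝ≥0∞)⁻¹ ^ k) ^ s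

@[simp] lemma dyContent_zero (s : ℝ) : dyContent s 0 = 1 := by simp [dyContent]

lemma dyContent_eq_two_rpow (s : ℝ) (k : ℕ) : dyContent s k = 2 ^ (-(k * s)) := by
  rw [dyContent, ← ENNReal.inv_pow, ENNReal.inv_rpow, ← ENNReal.rpow_natCast, ← ENNReal.rpow_mul,
    ENNReal.rpow_neg]

lemma dyContent_eq_pow (s : ℝ) (k : ℕ) : dyContent s k = (2⁻¹ ^ s) ^ k := by
  rw [dyContent, ← ENNReal.rpow_natCast, ← ENNReal.rpow_mul, mul_comm, ENNReal.rpow_mul,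
    ENNReal.rpow_natCast]

lemma dyContent_ne_zero (s : ℝ) (k : ℕ) : dyContent s k ≠ 0 := by
  simp [dyContent_eq_two_rpow, ENNReal.rpow_eq_zero_iff]

lemma dyContent_ne_top (s : ℝ) (k : ℕ) : dyContent s k ≠ ⊤ := by
  simp [dyContent_eq_two_rpow, ENNReal.rpow_eq_top_iff]

lemma exists_dyContent_lt {s : ℝ} (hs : 0 < s) {η : ℝ≥0∞} (hη : η ≠ 0) :
    ∃ j, dyContent s j < η := by
  simp only [dyContent_eq_pow]
  exact ((ENNReal.tendsto_pow_atTop_nhds_zero_of_lt_one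
    (ENNReal.rpow_lt_one (by norm_num) hs)).eventually (gt_mem_nhds hη.bot_lt)).exists

lemma natCast_le_of_mul_dyContent_le {s : ℝ} {N k l : ℕ}
    (h : (N : ℝ≥0∞) * dyContent s k ≤ dyContent s l) : (N : ℝ) ≤ 2 ^ (((k : ℝ) - l) * s) := by
  rw [← ENNReal.le_div_iff_mul_le (.inl (dyContent_ne_zero s k)) (.inl (dyContent_ne_top s k)),
    dyContent_eq_two_rpow, dyContent_eq_two_rpow, ENNReal.div_eq_inv_mul, ← ENNReal.rpow_neg,
    ← ENNReal.rpow_add _ _ (by norm_num) (by norm_num), ← ENNReal.ofReal_ofNat 2,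
    ENNReal.ofReal_rpow_of_pos (by norm_num), ← ENNReal.ofReal_natCast,
    ENNReal.ofReal_le_ofReal_iff (by positivity)] at h
  convert h using 2
  ring

namespace DyadicIndex

variable {m : ℕ}

instance : MeasurableSpace (DyadicIndex m) := ⊤

instance : DiscreteMeasurableSpace (DyadicIndex m) := ⟨fun _ => trivial⟩

lemma exists_le_maximal {P : DyadicIndex m → Prop} {p : DyadicIndex m} (hp : P p) :
    ∃ q, Maximal P q ∧ p ≤ q := by
  obtain ⟨q, hpq, hq⟩ := ((finite_Ici p).subset (sep_subset _ P)).exists_le_maximal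
    (show p ∈ {q ∈ Ici p | P q} from ⟨Set.self_mem_Ici, hp⟩)
  exact ⟨q, ⟨hq.prop.2, fun r hr hqr => hq.2 ⟨hpq.trans hqr, hr⟩ hqr⟩, hpq⟩

lemma disjoint_Iic_of_maximal {P : DyadicIndex m → Prop} {p q : DyadicIndex m}
    (hp : Maximal P p) (hq : Maximal P q) (hpq : p ≠ q) : Disjoint (Iic p) (Iic q) :=
  Set.disjoint_left.2 fun _ hrp hrq => hpq <| (le_total_of_le hrp hrq).elim
    (fun h => hp.eq_of_le hq.1 h) (fun h => (hq.eq_of_le hp.1 h).symm)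

def IsHeavy (s : ℝ) (ν : Measure (DyadicIndex m)) (q : DyadicIndex m) : Prop :=
  dyContent s q.level ≤ ν (Iic q)

variable {s : ℝ}

lemma tsum_content_le_measure_biUnion {ν : Measure (DyadicIndex m)} {A : Set (DyadicIndex m)}
    (hA : ∀ q ∈ A, Maximal (IsHeavy s ν) q) :
    ∑' q : A, dyContent s q.1.level ≤ ν (⋃ q ∈ A, Iic q) := by
  rw [measure_biUnion A.to_countable
    (fun p hp q hq hpq => disjoint_Iic_of_maximal (hA p hp) (hA q hq) hpq)
    (fun _ _ => .of_discrete)]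
  exact ENNReal.tsum_le_tsum fun q => (hA q q.2).prop

lemma tsum_content_le_of_maximal_lt {ν : Measure (DyadicIndex m)} {p Q : DyadicIndex m}
    (hp : Maximal (IsHeavy s ν) p) (hpQ : p < Q) :
    ∑' q : {q | Maximal (IsHeavy s ν) q ∧ q ≤ Q}, dyContent s q.1.level ≤ dyContent s Q.level :=
  calc ∑' q : {q | Maximal (IsHeavy s ν) q ∧ q ≤ Q}, dyContent s q.1.level
      ≤ ν (⋃ q ∈ {q | Maximal (IsHeavy s ν) q ∧ q ≤ Q}, Iic q) :=
        tsum_content_le_measure_biUnion fun _ hq => hq.1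
    _ ≤ ν (Iic Q) := measure_mono (iUnion₂_subset fun _ hq => Iic_subset_Iic.2 hq.2)
    -- `Q` is not heavy, being strictly above the maximal heavy cube `p`
    _ ≤ dyContent s Q.level :=
        not_le.1 (fun hQ => hpQ.ne (hp.eq_of_le hQ hpQ.le)) |>.le

theorem exists_spaced_cover {S : Set (DyadicIndex m)}
    (hS : ∑' p : S, dyContent s p.1.level < 1) :
    ∃ M : Set (DyadicIndex m), (∀ p ∈ S, ∃ q ∈ M, p ≤ q) ∧ (∀ q ∈ M, q.level ≠ 0) ∧
      ∑' q : M, dyContent s q.1.level ≤ ∑' p : S, dyContent s p.1.level ∧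
      ∀ p ∈ M, ∀ Q, p < Q →
        ∑' q : {q ∈ M | q ≤ Q}, dyContent s q.1.level ≤ dyContent s Q.level := by
  set ν : Measure (DyadicIndex m) :=
    Measure.sum fun p : S => dyContent s p.1.level • Measure.dirac p.1
  have hν : ν univ = ∑' p : S, dyContent s p.1.level := by
    simp [ν, Measure.sum_apply _ MeasurableSet.univ]
  have hSheavy : ∀ p ∈ S, IsHeavy s ν p := fun p hp =>
    calc dyContent s p.level = (dyContent s p.level • Measure.dirac p) (Iic p) := by simp
      _ ≤ ν (Iic p) :=
        Measure.le_sum (fun p : S => dyContent s p.1.level • Measure.dirac p.1) ⟨p, hp⟩ _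
  refine ⟨{q | Maximal (IsHeavy s ν) q}, fun p hp => exists_le_maximal (hSheavy p hp),
    fun q hq hq0 => ?_, ?_, fun p hp Q hpQ => tsum_content_le_of_maximal_lt hp hpQ⟩
  · have := hq.prop.trans ((measure_mono (subset_univ _)).trans_eq hν) |>.trans_lt hS
    simp [hq0] at this
  · exact (tsum_content_le_measure_biUnion fun _ hq => hq).trans
      ((measure_mono (subset_univ _)).trans_eq hν)

lemma tsum_content_eq_tsum_encard (A : Set (DyadicIndex m)) :
    ∑' p : A, dyContent s p.1.level = ∑' k, ({z | ⟨k, z⟩ ∈ A}.encard : ℝ≥0∞) * dyContent s k := by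
  rw [tsum_subtype A (fun p => dyContent s p.level), ← equivProd.symm.tsum_eq,
    ENNReal.tsum_prod']
  refine tsum_congr fun k => ?_
  rw [← ENNReal.tsum_set_const, tsum_subtype _ fun _ => dyContent s k]
  rfl

lemma encard_mul_content_le_tsum (A : Set (DyadicIndex m)) (k : ℕ) :
    ({z | ⟨k, z⟩ ∈ A}.encard : ℝ≥0∞) * dyContent s k ≤ ∑' p : A, dyContent s p.1.level :=
  (tsum_content_eq_tsum_encard A).symm ▸ ENNReal.le_tsum k

lemma finite_of_tsum_content_ne_top {A : Set (DyadicIndex m)}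
    (hA : ∑' p : A, dyContent s p.1.level ≠ ⊤) (k : ℕ) : {z | ⟨k, z⟩ ∈ A}.Finite := by
  have := ENNReal.lt_top_of_mul_ne_top_left
    (ne_top_of_le_ne_top hA (encard_mul_content_le_tsum A k)) (dyContent_ne_zero s k)
  simpa using this

lemma tsum_content_eq_tsum_ncard {A : Set (DyadicIndex m)} (hA : ∀ k, {z | ⟨k, z⟩ ∈ A}.Finite) :
    ∑' p : A, dyContent s p.1.level = ∑' k, ({z | ⟨k, z⟩ ∈ A}.ncard : ℝ≥0∞) * dyContent s k := by
  rw [tsum_content_eq_tsum_encard]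
  refine tsum_congr fun k => ?_
  rw [← (hA k).cast_ncard_eq, ENat.toENNReal_coe]

lemma ncard_subcubes_mul_content_le {M : Set (DyadicIndex m)}
    (hM : ∀ p ∈ M, ∀ Q, p < Q →
      ∑' q : {q ∈ M | q ≤ Q}, dyContent s q.1.level ≤ dyContent s Q.level)
    {k l : ℕ} (hfin : {z | ⟨k, z⟩ ∈ M}.Finite) (hlk : l < k) (w : Fin m → ℕ) :
    ({z ∈ {z | ⟨k, z⟩ ∈ M} | dyCube m k z ⊆ dyCube m l w}.ncard : ℝ≥0∞) * dyContent s k ≤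
      dyContent s l := by
  set A := {z ∈ {z | ⟨k, z⟩ ∈ M} | dyCube m k z ⊆ dyCube m l w}
  have hle : ∀ z ∈ A, (⟨k, z⟩ : DyadicIndex m) ≤ ⟨l, w⟩ := fun z hz =>
    have ⟨x, hx⟩ := dyCube_nonempty m k z
    le_of_mem_cube hx (hz.2 hx) hlk.le
  rcases A.eq_empty_or_nonempty with hA | ⟨z₀, hz₀⟩
  · simp [hA]
  have hlt : (⟨k, z₀⟩ : DyadicIndex m) < ⟨l, w⟩ :=
    (hle z₀ hz₀).lt_of_ne fun h => hlk.ne' (congrArg level h)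
  calc (A.ncard : ℝ≥0∞) * dyContent s k = A.encard * dyContent s k := by
        rw [← (hfin.subset (sep_subset _ _)).cast_ncard_eq, ENat.toENNReal_coe]
    _ ≤ {z | ⟨k, z⟩ ∈ {q ∈ M | q ≤ ⟨l, w⟩}}.encard * dyContent s k := by
        gcongr
        exact fun z hz => ⟨hz.1, hle z hz⟩
    _ ≤ ∑' q : {q ∈ M | q ≤ ⟨l, w⟩}, dyContent s q.1.level := encard_mul_content_le_tsum _ k
    _ ≤ dyContent s l := hM _ hz₀.1 _ hlt

end DyadicIndex

lemma exists_cover_tsum_lt_of_hausdorffMeasure_eq_zero {X : Type*} [EMetricSpace X]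
    [MeasurableSpace X] [BorelSpace X] {d : ℝ} (hd : 0 ≤ d) {A : Set X} (hA : μH[d] A = 0)
    {r δ : ℝ≥0∞} (hr : 0 < r) (hδ : 0 < δ) :
    ∃ t : ℕ → Set X, A ⊆ ⋃ n, t n ∧ (∀ n, t n ⊆ A) ∧ (∀ n, ediam (t n) ≤ r) ∧
      ∑' n, ⨆ _ : (t n).Nonempty, ediam (t n) ^ d < δ := by
  have h := (le_iSup₂ (f := fun r (_ : 0 < r) => ⨅ (t : ℕ → Set X) (_ : A ⊆ ⋃ n, t n)
    (_ : ∀ n, ediam (t n) ≤ r), ∑' n, ⨆ _ : (t n).Nonempty, ediam (t n) ^ d) r hr).trans_eq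
    (Measure.hausdorffMeasure_apply d A).symm
  rw [hA] at h
  obtain ⟨t, htA, htr, ht⟩ : ∃ t : ℕ → Set X, A ⊆ ⋃ n, t n ∧ (∀ n, ediam (t n) ≤ r) ∧
      ∑' n, ⨆ _ : (t n).Nonempty, ediam (t n) ^ d < δ := by
    simpa only [iInf_lt_iff, exists_prop] using h.trans_lt hδ
  refine ⟨fun n => t n ∩ A, fun x hx => ?_, fun n => inter_subset_right,
    fun n => (ediam_mono inter_subset_left).trans (htr n),
    (ENNReal.tsum_le_tsum fun n => ?_).trans_lt ht⟩
  · obtain ⟨n, hn⟩ := mem_iUnion.1 (htA hx)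
    exact mem_iUnion.2 ⟨n, hn, hx⟩
  · exact iSup_le fun hn => le_iSup_of_le (hn.mono inter_subset_left)
      (ENNReal.rpow_le_rpow (ediam_mono inter_subset_left) hd)

lemma ENNReal.exists_inv_two_pow_le_lt_two_mul {d : ℝ≥0∞} (hd0 : d ≠ 0) (hd1 : d ≤ 1) :
    ∃ K : ℕ, d ≤ 2⁻¹ ^ K ∧ 2⁻¹ ^ K < 2 * d := by
  classical
  have hex : ∃ K : ℕ, (2 : ℝ≥0∞)⁻¹ ^ K < 2 * d :=
    ENNReal.exists_inv_two_pow_lt (mul_ne_zero two_ne_zero hd0)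
  refine ⟨Nat.find hex, ?_, Nat.find_spec hex⟩
  rcases hK : Nat.find hex with _ | K
  · rw [pow_zero]
    exact hd1
  · have hK' := not_lt.1 (Nat.find_min hex (show K < Nat.find hex by omega))
    calc d = 2 * d * 2⁻¹ := by
          rw [mul_comm 2 d, mul_assoc, ENNReal.mul_inv_cancel two_ne_zero ENNReal.ofNat_ne_top,
            mul_one]
      _ ≤ 2⁻¹ ^ K * 2⁻¹ := by gcongr
      _ = 2⁻¹ ^ (K + 1) := (pow_succ _ _).symm

lemma Nat.floor_le_floor_add_one {a b : ℝ} (hb : 0 ≤ b) (h : a ≤ b + 1) : ⌊a⌋₊ ≤ ⌊b⌋₊ + 1 :=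
  (Nat.floor_le_floor h).trans (Nat.floor_add_one hb).le

lemma subset_iUnion_dyCube_Icc {m K : ℕ} {t : Set (Fin m → ℝ)} (ht : ∀ x ∈ t, ∀ i, 0 ≤ x i)
    (hdiam : ediam t ≤ 2⁻¹ ^ K) {y : Fin m → ℝ} (hy : y ∈ t) :
    t ⊆ ⋃ z ∈ Finset.Icc (fun i => ⌊y i * 2 ^ K⌋₊ - 1) (fun i => ⌊y i * 2 ^ K⌋₊ + 1),
      dyCube m K z := by
  intro x hx
  have hdist : dist x y ≤ (2 ^ K)⁻¹ := by
    rw [← edist_le_ofReal (by positivity), ENNReal.ofReal_inv_of_pos (by positivity),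
      ENNReal.ofReal_pow zero_le_two, ENNReal.ofReal_ofNat, ENNReal.inv_pow]
    exact (edist_le_ediam_of_mem hx hy).trans hdiam
  have hxy : ∀ i, |x i * 2 ^ K - y i * 2 ^ K| ≤ 1 := fun i => by
    rw [← sub_mul, abs_mul, abs_of_pos (by positivity : (0 : ℝ) < 2 ^ K), ← Real.dist_eq,
      ← inv_mul_cancel₀ (pow_ne_zero K two_ne_zero : (2 : ℝ) ^ K ≠ 0)]
    gcongr
    exact (dist_le_pi_dist x y i).trans hdist
  refine mem_iUnion₂.2 ⟨fun i => ⌊x i * 2 ^ K⌋₊, Finset.mem_Icc.2 ⟨fun i => ?_, fun i => ?_⟩,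
    mem_dyCube_iff.2 fun i => ⟨ht x hx i, rfl⟩⟩
  · have := Nat.floor_le_floor_add_one (by have := ht x hx i; positivity)
      (by linarith [(abs_le.1 (hxy i)).1] : y i * 2 ^ K ≤ x i * 2 ^ K + 1)
    dsimp only
    omega
  · exact Nat.floor_le_floor_add_one (by have := ht y hy i; positivity)
      (by linarith [(abs_le.1 (hxy i)).2])

lemma Pi.card_Icc_sub_one_add_one_le {m : ℕ} (b : Fin m → ℕ) :
    (Finset.Icc (b - 1) (b + 1)).card ≤ 3 ^ m := by
  rw [Pi.card_Icc]
  refine (Finset.prod_le_pow_card _ _ 3 fun i _ => ?_).trans_eq (by simp)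
  simp only [Pi.sub_apply, Pi.add_apply, Pi.one_apply, Nat.card_Icc]
  omega

lemma exists_finset_dyadic_cover {m : ℕ} {s : ℝ} (hs : 0 < s) {t : Set (Fin m → ℝ)}
    (ht : ∀ x ∈ t, ∀ i, 0 ≤ x i) (hdiam : ediam t ≤ 1) {η : ℝ≥0∞} (hη : η ≠ 0) :
    ∃ T : Finset (DyadicIndex m), t ⊆ ⋃ p ∈ T, p.cube ∧
      ∑ p ∈ T, dyContent s p.level ≤ 3 ^ m * 2 ^ s * ((⨆ _ : t.Nonempty, ediam t ^ s) + η) := by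
  classical
  rcases t.eq_empty_or_nonempty with rfl | ⟨y, hy⟩
  · exact ⟨∅, by simp, by simp⟩
  obtain ⟨j, hj⟩ := exists_dyContent_lt hs hη
  -- bounding the diameter below by `2⁻ʲ` costs at most `η` and puts it between two dyadic scales
  set d := max (ediam t) (2⁻¹ ^ j)
  have hd0 : d ≠ 0 := (lt_max_of_lt_right (ENNReal.pow_pos (by norm_num) j)).ne'
  obtain ⟨K, hdK, hKd⟩ :=
    ENNReal.exists_inv_two_pow_le_lt_two_mul hd0 (max_le hdiam (pow_le_one₀ (by simp) (by simp)))
  have hK : dyContent s K ≤ 2 ^ s * ((⨆ _ : t.Nonempty, ediam t ^ s) + η) :=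
    calc dyContent s K ≤ (2 * d) ^ s := ENNReal.rpow_le_rpow hKd.le hs.le
      _ = 2 ^ s * max (ediam t ^ s) (dyContent s j) := by
        rw [ENNReal.mul_rpow_of_nonneg _ _ hs.le, ENNReal.max_rpow hs.le, dyContent]
      _ ≤ 2 ^ s * ((⨆ _ : t.Nonempty, ediam t ^ s) + η) := by
        rw [iSup_pos ⟨y, hy⟩]
        gcongr
        exact max_le le_self_add (hj.le.trans le_add_self)
  set b : Fin m → ℕ := fun i => ⌊y i * 2 ^ K⌋₊
  refine ⟨(Finset.Icc (b - 1) (b + 1)).image (DyadicIndex.mk K), ?_, ?_⟩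
  · rw [Finset.set_biUnion_finset_image]
    exact subset_iUnion_dyCube_Icc ht ((le_max_left _ _).trans hdK) hy
  · rw [Finset.sum_image fun _ _ _ _ h => (DyadicIndex.mk.inj h).2]
    simp only [Finset.sum_const, nsmul_eq_mul]
    rw [mul_assoc]
    gcongr
    exact_mod_cast Pi.card_Icc_sub_one_add_one_le b

theorem exists_dyadic_cover_tsum_le {m : ℕ} {s : ℝ} (hs : 0 < s) {X : Set (Fin m → ℝ)}
    (hX : ∀ x ∈ X, ∀ i, 0 ≤ x i) (hμ : μH[s] X = 0) {δ : ℝ≥0∞} (hδ : δ ≠ 0) :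
    ∃ S : Set (DyadicIndex m), X ⊆ ⋃ p ∈ S, p.cube ∧ ∑' p : S, dyContent s p.1.level ≤ δ := by
  set C : ℝ≥0∞ := 3 ^ m * 2 ^ s
  have hC : C * 2 ≠ ⊤ := ENNReal.mul_ne_top (ENNReal.mul_ne_top (by simp)
    (ENNReal.rpow_ne_top_of_nonneg hs.le (by simp))) (by simp)
  set δ' := δ / (C * 2)
  have hδ' : 0 < δ' := ENNReal.div_pos_iff.2 ⟨hδ, hC⟩
  obtain ⟨t, hXt, htX, htdiam, htsum⟩ :=
    exists_cover_tsum_lt_of_hausdorffMeasure_eq_zero hs.le hμ one_pos hδ'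
  obtain ⟨η, hη0, hη⟩ := ENNReal.exists_pos_sum_of_countable hδ'.ne' ℕ
  choose T hTcover hTsum using fun n => exists_finset_dyadic_cover hs
    (fun x hx => hX x (htX n hx)) (htdiam n) (ENNReal.coe_ne_zero.2 (hη0 n).ne')
  refine ⟨⋃ n, (T n : Set (DyadicIndex m)), fun x hx => ?_, ?_⟩
  · obtain ⟨n, hn⟩ := mem_iUnion.1 (hXt hx)
    obtain ⟨p, hp, hxp⟩ := mem_iUnion₂.1 (hTcover n hn)
    exact mem_iUnion₂.2 ⟨p, mem_iUnion.2 ⟨n, hp⟩, hxp⟩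
  calc ∑' p : ⋃ n, (T n : Set (DyadicIndex m)), dyContent s p.1.level
      ≤ ∑' n, ∑' p : (T n : Set (DyadicIndex m)), dyContent s p.1.level :=
        ENNReal.tsum_iUnion_le_tsum (fun p : DyadicIndex m => dyContent s p.level) _
    _ = ∑' n, ∑ p ∈ T n, dyContent s p.level := by
        simp only [Finset.tsum_subtype' _ fun p : DyadicIndex m => dyContent s p.level]
    _ ≤ ∑' n, C * ((⨆ _ : (t n).Nonempty, ediam (t n) ^ s) + η n) := ENNReal.tsum_le_tsum hTsum
    _ = C * ((∑' n, ⨆ _ : (t n).Nonempty, ediam (t n) ^ s) + ∑' n, (η n : ℝ≥0∞)) := by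
        rw [ENNReal.tsum_mul_left, ENNReal.tsum_add]
    _ ≤ C * (δ' + δ') := by gcongr
    _ = C * 2 * δ' := by ring
    _ ≤ δ := ENNReal.mul_div_le

open DyadicIndex in
/-- if `X ⊆ [0,1]^m` has Hausdorff dimension `< s`, then for
every `ε > 0` there are collections `𝒞 k` of dyadic cubes of side `2^{-k}`,
`k ≥ 1`, covering `X`, with total `s`-content at most `ε`, each collection
satisfying the `s`-dimensional spacing condition. -/
theorem dyadic_covering_of_small_dim (m : ℕ) (s : ℝ) (hs : 0 < s)
    (X : Set (Fin m → ℝ)) (hX : X ⊆ {x | ∀ i, x i ∈ Icc (0:ℝ) 1})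
    (hdim : dimH X < ENNReal.ofReal s) (ε : ℝ) (hε : 0 < ε) :
    ∃ 𝒞 : ℕ → Set (Fin m → ℕ),
      (∀ k, (𝒞 k).Finite) ∧ 𝒞 0 = ∅ ∧
      (X ⊆ ⋃ k, ⋃ z ∈ 𝒞 k, dyCube m k z) ∧
      (∑' k, ((𝒞 k).ncard : ℝ≥0∞) * (((2:ℝ≥0∞)⁻¹ ^ k) ^ (s : ℝ)) ≤ ENNReal.ofReal ε) ∧
      (∀ k l : ℕ, l < k → ∀ w : Fin m → ℕ,
        (({z ∈ 𝒞 k | dyCube m k z ⊆ dyCube m l w}.ncard : ℝ)) ≤ (2:ℝ) ^ (((k:ℝ) - l) * s)) := by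
  obtain ⟨ε₀, hε₀, hε₀1, hε₀ε⟩ : ∃ ε₀ : ℝ≥0∞, ε₀ ≠ 0 ∧ ε₀ < 1 ∧ ε₀ ≤ ENNReal.ofReal ε :=
    ⟨min (ENNReal.ofReal ε) 2⁻¹, (lt_min (ENNReal.ofReal_pos.2 hε) (by norm_num)).ne',
      (min_le_right _ _).trans_lt (by norm_num), min_le_left _ _⟩
  have hμ : μH[s] X = 0 := by
    simpa [Real.coe_toNNReal s hs.le] using hausdorffMeasure_of_dimH_lt hdim
  obtain ⟨S, hXS, hS⟩ := exists_dyadic_cover_tsum_le hs (fun x hx i => (hX hx i).1) hμ hε₀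
  obtain ⟨M, hSM, hM0, hMS, hMQ⟩ := exists_spaced_cover (hS.trans_lt hε₀1)
  have hMε₀ := hMS.trans hS
  have hMfin := finite_of_tsum_content_ne_top (hMε₀.trans_lt (hε₀1.trans ENNReal.one_lt_top)).ne
  refine ⟨fun k => {z | (⟨k, z⟩ : DyadicIndex m) ∈ M}, hMfin,
    eq_empty_of_forall_notMem fun z hz => hM0 ⟨0, z⟩ hz rfl, fun x hx => ?_,
    (tsum_content_eq_tsum_ncard hMfin).symm.trans_le (hMε₀.trans hε₀ε),
    fun k l hlk w => natCast_le_of_mul_dyContent_le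
      (ncard_subcubes_mul_content_le hMQ (hMfin k) hlk w)⟩
  obtain ⟨p, hp, hxp⟩ := mem_iUnion₂.1 (hXS hx)
  obtain ⟨q, hq, hpq⟩ := hSM p hp
  simp only [mem_iUnion]
  exact ⟨q.level, q.index, hq, cube_mono hpq hxp⟩
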